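/- arXiv:2310.15312 — 2 statements merged into one kernel-verified Lean document; each statement's English description precedes it below -/
import Mathlib

section
/- For any integers h and k with k ≠ 0, the formal power series kx(e^{hx}-1)/(e^{kx}-1) is equal to a Hurwitz series times |k|x(e^x-1)/(e^{|k|x}-1). -/
open PowerSeries

/-- A Hurwitz series: a formal power series `∑ f_n x^n / n!` over `ℚ` with all
`f_n = n! · (coefficient of x^n)` integers. -/
def IsHurwitz (f : PowerSeries ℚ) : Prop :=
  ∀ n : ℕ, ∃ m : ℤ, (n.factorial : ℚ) * PowerSeries.coeff n f = (m : ℚ)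

/-! Telescoping gives `e^{hx} - 1 = G·(e^x - 1)` with `G = ∑_{0 ≤ j < h} e^{jx}` for `h ≥ 0`
and `G = -e^{hx}·∑_{0 ≤ j < -h} e^{jx}` for `h < 0`; moreover
`k·(e^{|k|x} - 1) = |k|·e^{k⁻x}·(e^{kx} - 1)`.
Hence `H = G·e^{k⁻x}` works: the Hurwitz series form a subring of `ℚ⟦X⟧` (the binomial
convolution of integer sequences is integral) containing every `e^{jx}` with `j ∈ ℤ`. -/

open Finset Nat

namespace PowerSeries

variable {A : Type*}

theorem factorial_mul_coeff_mul [CommSemiring A] (f g : A⟦X⟧) (n : ℕ) :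
    (n ! : A) * coeff n (f * g) =
      ∑ p ∈ antidiagonal n,
        (n.choose p.1 : A) * (p.1 ! * coeff p.1 f) * (p.2 ! * coeff p.2 g) := by
  rw [coeff_mul, mul_sum]
  refine sum_congr rfl fun p hp => ?_
  obtain rfl : p.1 + p.2 = n := mem_antidiagonal.mp hp
  rw [← choose_mul_factorial_mul_factorial (le_add_right le_rfl), Nat.add_sub_cancel_left]
  push_cast
  ring

variable [CommRing A] [Algebra ℚ A]

theorem rescale_exp_sub_one_eq_neg_mul (a : A) :
    rescale a (exp A) - 1 = -(rescale a (exp A) * (rescale (-a) (exp A) - 1)) := by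
  rw [mul_sub, exp_mul_exp_eq_exp_add, add_neg_cancel, rescale_zero]
  simp [constantCoeff_exp]

theorem rescale_natCast_exp_sub_one (n : ℕ) :
    rescale (n : A) (exp A) - 1 = (∑ j ∈ range n, rescale (j : A) (exp A)) * (exp A - 1) := by
  simp only [← exp_pow_eq_rescale_exp, geom_sum_mul]

theorem mul_rescale_abs_exp_sub_one [LinearOrder A] [IsOrderedAddMonoid A] (a : A) :
    C a * (rescale |a| (exp A) - 1) =
      C |a| * rescale a⁻ (exp A) * (rescale a (exp A) - 1) := by
  rcases le_or_gt 0 a with ha | ha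
  · simp [abs_of_nonneg ha, negPart_eq_zero.mpr ha, rescale_zero, constantCoeff_exp]
  · rw [abs_of_neg ha, negPart_eq_neg.mpr ha.le, rescale_exp_sub_one_eq_neg_mul (-a), neg_neg,
      map_neg]
    ring

end PowerSeries

theorem isHurwitz_rescale_exp (a : ℤ) : IsHurwitz (rescale (a : ℚ) (exp ℚ)) := fun n =>
  ⟨a ^ n, by
    simp only [coeff_rescale, coeff_exp, Algebra.algebraMap_self, RingHom.id_apply, Int.cast_pow]
    field_simp⟩

def hurwitzSubring : Subring ℚ⟦X⟧ where
  carrier := {f | IsHurwitz f}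
  zero_mem' n := ⟨0, by simp⟩
  one_mem' n := ⟨if n = 0 then 1 else 0, by rw [coeff_one]; split_ifs <;> simp [*]⟩
  add_mem' {f g} hf hg n := by
    obtain ⟨a, ha⟩ := hf n
    obtain ⟨b, hb⟩ := hg n
    exact ⟨a + b, by rw [map_add, mul_add, ha, hb, Int.cast_add]⟩
  neg_mem' {f} hf n := by
    obtain ⟨a, ha⟩ := hf n
    exact ⟨-a, by rw [map_neg, mul_neg, ha, Int.cast_neg]⟩
  mul_mem' {f g} hf hg n := by
    choose a ha using hf
    choose b hb using hg
    refine ⟨∑ p ∈ antidiagonal n, (n.choose p.1 : ℤ) * a p.1 * b p.2, ?_⟩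
    simp only [factorial_mul_coeff_mul, ha, hb]
    push_cast
    rfl

theorem exists_isHurwitz_rescale_exp_sub_one (h : ℤ) :
    ∃ G, IsHurwitz G ∧ rescale (h : ℚ) (exp ℚ) - 1 = G * (exp ℚ - 1) := by
  have geom (n : ℕ) : (∑ j ∈ range n, rescale (j : ℚ) (exp ℚ)) ∈ hurwitzSubring :=
    sum_mem fun j _ => by exact_mod_cast isHurwitz_rescale_exp j
  obtain ⟨n, rfl | rfl⟩ := h.eq_nat_or_neg
  · exact ⟨_, geom n, by exact_mod_cast rescale_natCast_exp_sub_one n⟩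
  · refine ⟨-(rescale (-n : ℚ) (exp ℚ) * ∑ j ∈ range n, rescale (j : ℚ) (exp ℚ)),
      neg_mem (mul_mem (by exact_mod_cast isHurwitz_rescale_exp (-n)) (geom n)), ?_⟩
    rw [Int.cast_neg, Int.cast_natCast, rescale_exp_sub_one_eq_neg_mul, neg_neg,
      rescale_natCast_exp_sub_one, neg_mul, mul_assoc]

theorem am_reduction_general (h k : ℤ) :
    ∃ H : PowerSeries ℚ, IsHurwitz H ∧
      PowerSeries.C (k : ℚ) * PowerSeries.X * (rescale (h : ℚ) (exp ℚ) - 1) *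
          (rescale (|k| : ℚ) (exp ℚ) - 1) =
        H * (PowerSeries.C (|k| : ℚ) * PowerSeries.X * (exp ℚ - 1) *
          (rescale (k : ℚ) (exp ℚ) - 1)) := by
  obtain ⟨G, hG, hGe⟩ := exists_isHurwitz_rescale_exp_sub_one h
  have hneg : IsHurwitz (rescale (k : ℚ)⁻ (exp ℚ)) := by
    simpa [negPart_def] using isHurwitz_rescale_exp k⁻
  refine ⟨G * rescale (k : ℚ)⁻ (exp ℚ), hurwitzSubring.mul_mem hG hneg, ?_⟩
  rw [hGe]
  linear_combination (X * G * (exp ℚ - 1)) * mul_rescale_abs_exp_sub_one (k : ℚ)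

/-- For integers `h` and `k ≠ 0`, the series `k·x·(e^{hx}-1)/(e^{kx}-1)` equals a
Hurwitz series times `|k|·x·(e^x-1)/(e^{|k|x}-1)`.  Stated in cross-multiplied
form (equivalent, since `ℚ⟦X⟧` is a domain and the denominators are nonzero):
`k·x·(e^{hx}-1)·(e^{|k|x}-1) = H · |k|·x·(e^x-1)·(e^{kx}-1)`. -/
theorem am_reduction (h k : ℤ) (hk : k ≠ 0) :
    ∃ H : PowerSeries ℚ, IsHurwitz H ∧
      PowerSeries.C (k : ℚ) * PowerSeries.X * (rescale (h : ℚ) (exp ℚ) - 1) *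
          (rescale (|k| : ℚ) (exp ℚ) - 1) =
        H * (PowerSeries.C (|k| : ℚ) * PowerSeries.X * (exp ℚ - 1) *
          (rescale (k : ℚ) (exp ℚ) - 1)) :=
  am_reduction_general h k
end

section
/- Substituting e^x - 1 for x in 2 log(1+x)/(2+x) yields the series 2x/(e^x+1); hence the Genocchi numbers, defined as n! times the x^n coefficients of 2x/(e^x+1), are integers. -/
open PowerSeries

/-- Composition `f(g(x))` of formal power series, valid when `g` has zero
constant term. -/
noncomputable def PowerSeries.comp (f g : PowerSeries ℚ) : PowerSeries ℚ :=
  PowerSeries.mk fun n =>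
    ∑ k ∈ Finset.range (n + 1), PowerSeries.coeff k f * PowerSeries.coeff n (g ^ k)

/-- The formal power series `log(1+x) = ∑_{n≥1} (-1)^{n-1} x^n/n` over `ℚ`. -/
noncomputable def logOnePlusX : PowerSeries ℚ :=
  PowerSeries.mk fun n => if n = 0 then 0 else (-1 : ℚ) ^ (n - 1) / n

/-!
The substitution identity follows from the chain rule: `log(1+x)` composed with `e^x - 1` has
derivative `e^x / e^x = 1`, so it is `x`, while `2 + x` becomes `e^x + 1`.

For integrality, `x/(e^x+1) = x/(e^x-1) - 2x/(e^{2x}-1)` gives `G_n = 2(1 - 2^n) B_n`.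
This vanishes for odd `n > 1`, and for `n = 2k` von Staudt–Clausen writes `B_{2k}` as an integer
minus `∑ 1/p` over the primes with `p - 1 ∣ 2k`; each such `p` divides `2(4^k - 1)`, by Fermat's
little theorem when `p` is odd.
-/

namespace PowerSeries

theorem comp_eq_subst {f g : ℚ⟦X⟧} (hg : constantCoeff g = 0) : f.comp g = f.subst g := by
  ext n
  rw [coeff_subst' (.of_constantCoeff_zero' hg),
    finsum_eq_sum_of_support_subset (s := Finset.range (n + 1))]
  · simp [PowerSeries.comp]
  · intro d hd
    rw [Finset.coe_range, Set.mem_Iio]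
    by_contra! h
    have hdvd : X ^ d ∣ g ^ d := pow_dvd_pow_of_dvd (X_dvd_iff.mpr hg) d
    rw [Function.mem_support, X_pow_dvd_iff.mp hdvd n (by omega), smul_zero] at hd
    exact hd rfl

theorem subst_inv {k : Type*} [Field k] {a : k⟦X⟧} (ha : HasSubst a) {f : k⟦X⟧}
    (hf : constantCoeff f ≠ 0) : f⁻¹.subst a = (f.subst a)⁻¹ := by
  have h := congrArg (substAlgHom ha) (PowerSeries.mul_inv_cancel f hf)
  rw [map_mul, map_one, coe_substAlgHom] at h
  have hc : constantCoeff (f.subst a) ≠ 0 :=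
    left_ne_zero_of_mul_eq_one (by rw [← map_mul, h, map_one])
  rw [eq_inv_iff_mul_eq_one hc, mul_comm, h]

variable {A : Type*} [CommRing A] [Algebra ℚ A]

theorem one_add_X_mul_derivative_log : (1 + X) * d⁄dX A (log A) = 1 := by
  ext n
  rw [deriv_log, add_mul, one_mul, map_add]
  cases n with
  | zero => simp
  | succ n => simp [pow_succ]

theorem log_subst_exp_sub_one : (log A).subst (exp A - 1) = X := by
  have h := congrArg (substAlgHom (HasSubst.exp_sub_one (A := A)))
    (one_add_X_mul_derivative_log (A := A))
  rw [map_mul, map_add, map_one, coe_substAlgHom, subst_X HasSubst.exp_sub_one,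
    add_sub_cancel] at h
  have := IsAddTorsionFree.of_module_rat (M := A)
  apply derivative.ext
  · rw [derivative_subst HasSubst.exp_sub_one, map_sub, derivative_exp,
      Derivation.map_one_eq_zero, sub_zero, derivative_X, mul_comm, h]
  · rw [← logOf_eq, constantCoeff_logOf constantCoeff_exp, constantCoeff_X]

end PowerSeries

theorem logOnePlusX_eq_log : logOnePlusX = log ℚ := by
  ext (_ | n)
  · simp [logOnePlusX]
  · simp [logOnePlusX, pow_succ]

theorem comp_two_mul_logOnePlusX_div_two_add_X :
    (C (2 : ℚ) * logOnePlusX * (C 2 + X)⁻¹).comp (exp ℚ - 1) =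
      C 2 * X * (exp ℚ + 1)⁻¹ := by
  have ha : HasSubst (exp ℚ - 1) := HasSubst.exp_sub_one
  rw [comp_eq_subst (by simp), logOnePlusX_eq_log, subst_mul ha, subst_mul ha, subst_C,
    log_subst_exp_sub_one, subst_inv ha (by simp), subst_add ha, subst_C, subst_X ha]
  have h2 : (MvPowerSeries.C 2 : ℚ⟦X⟧) = 2 := map_ofNat _ 2
  rw [h2, map_ofNat]
  ring_nf

theorem bernoulliPowerSeries_sub_rescale_two_mul_exp_add_one :
    (bernoulliPowerSeries ℚ - rescale 2 (bernoulliPowerSeries ℚ)) * (exp ℚ + 1) = X := by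
  have hB := bernoulliPowerSeries_mul_exp_sub_one ℚ
  have h2B : rescale 2 (bernoulliPowerSeries ℚ) * (exp ℚ ^ 2 - 1) = 2 * X := by
    rw [exp_pow_eq_rescale_exp, Nat.cast_ofNat, ← map_ofNat C 2, ← rescale_X, ← hB, map_mul,
      map_sub, map_one]
  have hne : exp ℚ - 1 ≠ 0 := fun h => by simpa using congrArg (coeff 1) h
  refine mul_right_cancel₀ hne ?_
  linear_combination (exp ℚ + 1) * hB - h2B

theorem two_mul_X_mul_inv_exp_add_one_eq_bernoulliPowerSeries :
    C (2 : ℚ) * X * (exp ℚ + 1)⁻¹ =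
      C 2 * (bernoulliPowerSeries ℚ - rescale 2 (bernoulliPowerSeries ℚ)) := by
  rw [← bernoulliPowerSeries_sub_rescale_two_mul_exp_add_one, mul_assoc, mul_assoc,
    PowerSeries.mul_inv_cancel _ (by simp), mul_one]

theorem factorial_mul_coeff_two_mul_X_mul_inv_exp_add_one (n : ℕ) :
    (n.factorial : ℚ) * coeff n (C (2 : ℚ) * X * (exp ℚ + 1)⁻¹) =
      2 * (1 - 2 ^ n) * bernoulli n := by
  rw [two_mul_X_mul_inv_exp_add_one_eq_bernoulliPowerSeries, coeff_C_mul, map_sub,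
    coeff_rescale, bernoulliPowerSeries, coeff_mk, Algebra.algebraMap_self, RingHom.id_apply]
  field_simp

theorem prime_dvd_two_mul_two_pow_sub_one {p k : ℕ} (hp : p.Prime) (hk : p - 1 ∣ k) :
    (p : ℤ) ∣ 2 * (2 ^ k - 1) := by
  rcases hp.eq_two_or_odd' with rfl | hodd
  · exact dvd_mul_right _ _
  · have hcop : IsCoprime (2 : ℤ) p := by
      rw [Int.isCoprime_iff_gcd_eq_one]
      exact_mod_cast Nat.coprime_two_left.mpr hodd
    obtain ⟨j, rfl⟩ := hk
    have hfermat := ((Int.ModEq.pow_card_sub_one_eq_one hp hcop).pow j).dvd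
    rw [one_pow, ← pow_mul] at hfermat
    exact dvd_mul_of_dvd_right (by simpa using hfermat.neg_right) _

theorem exists_int_eq_two_mul_one_sub_two_pow_mul_bernoulli (n : ℕ) :
    ∃ m : ℤ, 2 * (1 - 2 ^ n) * bernoulli n = m := by
  obtain ⟨k, rfl | rfl⟩ := Nat.even_or_odd' n
  · obtain ⟨N, hN⟩ := Bernoulli.vonStaudt_clausen k
    set P := (Finset.range (2 * k + 2)).filter fun p => p.Prime ∧ p - 1 ∣ 2 * k
    set c : ℤ := 2 * (2 ^ (2 * k) - 1)
    have hterm : ∀ p ∈ P, ((c / p : ℤ) : ℚ) = c * (1 / p) := fun p hp => by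
      rw [Finset.mem_filter] at hp
      rw [Int.cast_div (prime_dvd_two_mul_two_pow_sub_one hp.2.1 hp.2.2)
        (by exact_mod_cast hp.2.1.ne_zero), Int.cast_natCast, mul_one_div]
    refine ⟨-c * N + ∑ p ∈ P, c / p, ?_⟩
    rw [Int.cast_add, Int.cast_sum, Finset.sum_congr rfl hterm, ← Finset.mul_sum, Int.cast_mul,
      hN]
    push_cast [c]
    ring
  · rcases Nat.eq_zero_or_pos k with rfl | hk
    · exact ⟨1, by norm_num [bernoulli_one]⟩
    · exact ⟨0, by rw [bernoulli_eq_zero_of_odd (odd_two_mul_add_one k) (by omega)]; simp⟩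

/-- Substituting `e^x - 1` for `x` in `2·log(1+x)/(2+x)` yields `2x/(e^x+1)`;
hence the Genocchi numbers (the EGF coefficients of `2x/(e^x+1)`) are integers. -/
theorem genocchi_integral :
    PowerSeries.comp
        (PowerSeries.C (2 : ℚ) * logOnePlusX * (PowerSeries.C (2 : ℚ) + PowerSeries.X)⁻¹)
        (exp ℚ - 1) =
      PowerSeries.C (2 : ℚ) * PowerSeries.X * (exp ℚ + 1)⁻¹ ∧
    ∀ n : ℕ, ∃ m : ℤ,
      (n.factorial : ℚ) *
          PowerSeries.coeff n (PowerSeries.C (2 : ℚ) * PowerSeries.X * (exp ℚ + 1)⁻¹) =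
        (m : ℚ) := by
  refine ⟨comp_two_mul_logOnePlusX_div_two_add_X, fun n => ?_⟩
  rw [factorial_mul_coeff_two_mul_X_mul_inv_exp_add_one]
  exact exists_int_eq_two_mul_one_sub_two_pow_mul_bernoulli n
end
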